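/- arXiv:2310.12853 — 2 statements merged into one kernel-verified Lean document; each statement's English description precedes it below -/
import Mathlib

section
/- Let F ⊆ ℝ[x₁,...,xₙ] be nonempty generating the ideal I, let M be an Archimedean quadratic module and u ∈ ℝ[x] with uM ⊆ M and u F-stably contained in M. Then u is I-stably contained in M: for every p ∈ I there exists ε > 0 with u ± εp ∈ M. In particular, if u ∈ I, then u is a unit of the cone I ∩ M in the vector space I. -/
open MvPolynomial

def IsSOS {n : ℕ} (f : MvPolynomial (Fin n) ℝ) : Prop :=
  ∃ (m : ℕ) (p : Fin m → MvPolynomial (Fin n) ℝ), f = ∑ i, (p i) ^ 2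

def IsQuadraticModule {n : ℕ} (M : Set (MvPolynomial (Fin n) ℝ)) : Prop :=
  1 ∈ M ∧ (∀ p ∈ M, ∀ q ∈ M, p + q ∈ M) ∧
    (∀ σ : MvPolynomial (Fin n) ℝ, IsSOS σ → ∀ p ∈ M, σ * p ∈ M)

namespace StableAux

variable {n : ℕ} {M : Set (MvPolynomial (Fin n) ℝ)}

lemma sq_isSOS (q : MvPolynomial (Fin n) ℝ) : IsSOS (q ^ 2) :=
  ⟨1, fun _ => q, by simp⟩

lemma const_isSOS {c : ℝ} (hc : 0 ≤ c) : IsSOS (C c : MvPolynomial (Fin n) ℝ) :=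
  ⟨1, fun _ => C (Real.sqrt c), by simp [← map_pow, Real.sq_sqrt hc]⟩

lemma sqmul (hM : IsQuadraticModule M) (q p : MvPolynomial (Fin n) ℝ) (hp : p ∈ M) : q ^ 2 * p ∈ M :=
  hM.2.2 _ (sq_isSOS q) p hp

lemma cmul (hM : IsQuadraticModule M) {c : ℝ} (hc : 0 ≤ c) (p : MvPolynomial (Fin n) ℝ) (hp : p ∈ M) :
    C c * p ∈ M := hM.2.2 _ (const_isSOS hc) p hp

lemma addmem (hM : IsQuadraticModule M) {p q : MvPolynomial (Fin n) ℝ} (hp : p ∈ M) (hq : q ∈ M) : p + q ∈ M :=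
  hM.2.1 p hp q hq

lemma cmem (hM : IsQuadraticModule M) {c : ℝ} (hc : 0 ≤ c) : (C c : MvPolynomial (Fin n) ℝ) ∈ M := by
  simpa using cmul hM hc 1 hM.1

lemma sqbound (hM : IsQuadraticModule M) {g : MvPolynomial (Fin n) ℝ} {N : ℝ} (hN : 0 < N)
    (h₁ : (C N : MvPolynomial (Fin n) ℝ) - g ∈ M)
    (h₂ : (C N : MvPolynomial (Fin n) ℝ) + g ∈ M) :
    (C (N ^ 2) : MvPolynomial (Fin n) ℝ) - g ^ 2 ∈ M ∧
      (C (N ^ 2) : MvPolynomial (Fin n) ℝ) + g ^ 2 ∈ M := by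
  have hP : (C (N ^ 2) : MvPolynomial (Fin n) ℝ) = (C N) ^ 2 := by rw [map_pow]
  constructor
  · have key : (C (1 / (2 * N)) : MvPolynomial (Fin n) ℝ) *
        ((C N + g) ^ 2 * (C N - g) + (C N - g) ^ 2 * (C N + g)) ∈ M :=
      cmul hM (by positivity) _ (addmem hM (sqmul hM _ _ h₁) (sqmul hM _ _ h₂))
    have h' : (C (1 / (2 * N)) : MvPolynomial (Fin n) ℝ) * (2 * C N) = 1 := by
      rw [show (2 : MvPolynomial (Fin n) ℝ) = C (2:ℝ) from (map_ofNat C 2).symm,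
        ← map_mul, ← map_mul, show 1 / (2 * N) * (2 * N) = 1 by field_simp, map_one]
    have heq : (C (N ^ 2) : MvPolynomial (Fin n) ℝ) - g ^ 2 =
        C (1 / (2 * N)) * ((C N + g) ^ 2 * (C N - g) + (C N - g) ^ 2 * (C N + g)) := by
      linear_combination hP - ((C N : MvPolynomial (Fin n) ℝ) ^ 2 - g ^ 2) * h'
    rw [heq]; exact key
  · have key : ((C N : MvPolynomial (Fin n) ℝ)) ^ 2 * 1 + g ^ 2 * 1 ∈ M :=
      addmem hM (sqmul hM _ _ hM.1) (sqmul hM _ _ hM.1)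
    have heq : (C (N ^ 2) : MvPolynomial (Fin n) ℝ) + g ^ 2 =
        (C N) ^ 2 * 1 + g ^ 2 * 1 := by linear_combination hP
    rw [heq]; exact key

lemma mulbound (hM : IsQuadraticModule M) {a b : MvPolynomial (Fin n) ℝ} {Na Nb : ℝ} (ha : 0 < Na) (hb : 0 < Nb)
    (ha₁ : (C Na : MvPolynomial (Fin n) ℝ) - a ∈ M)
    (ha₂ : (C Na : MvPolynomial (Fin n) ℝ) + a ∈ M)
    (hb₁ : (C Nb : MvPolynomial (Fin n) ℝ) - b ∈ M)
    (hb₂ : (C Nb : MvPolynomial (Fin n) ℝ) + b ∈ M) :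
    ∃ K : ℝ, 0 < K ∧ (C K : MvPolynomial (Fin n) ℝ) - a * b ∈ M ∧
      (C K : MvPolynomial (Fin n) ℝ) + a * b ∈ M := by
  have hsum₁ : (C (Na + Nb) : MvPolynomial (Fin n) ℝ) - (a + b) ∈ M := by
    have := addmem hM ha₁ hb₁
    have heq : (C (Na + Nb) : MvPolynomial (Fin n) ℝ) - (a + b) =
        (C Na - a) + (C Nb - b) := by rw [map_add]; ring
    rw [heq]; exact this
  have hsum₂ : (C (Na + Nb) : MvPolynomial (Fin n) ℝ) + (a + b) ∈ M := by
    have := addmem hM ha₂ hb₂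
    have heq : (C (Na + Nb) : MvPolynomial (Fin n) ℝ) + (a + b) =
        (C Na + a) + (C Nb + b) := by rw [map_add]; ring
    rw [heq]; exact this
  have hdiff₁ : (C (Na + Nb) : MvPolynomial (Fin n) ℝ) - (a - b) ∈ M := by
    have := addmem hM ha₁ hb₂
    have heq : (C (Na + Nb) : MvPolynomial (Fin n) ℝ) - (a - b) =
        (C Na - a) + (C Nb + b) := by rw [map_add]; ring
    rw [heq]; exact this
  have hdiff₂ : (C (Na + Nb) : MvPolynomial (Fin n) ℝ) + (a - b) ∈ M := by
    have := addmem hM ha₂ hb₁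
    have heq : (C (Na + Nb) : MvPolynomial (Fin n) ℝ) + (a - b) =
        (C Na + a) + (C Nb - b) := by rw [map_add]; ring
    rw [heq]; exact this
  have hNN : (0:ℝ) < Na + Nb := by linarith
  obtain ⟨hs₁, hs₂⟩ := sqbound hM hNN hsum₁ hsum₂
  obtain ⟨hd₁, hd₂⟩ := sqbound hM hNN hdiff₁ hdiff₂
  refine ⟨(Na + Nb) ^ 2 / 2, by positivity, ?_, ?_⟩
  · have key : (C (1/4 : ℝ) : MvPolynomial (Fin n) ℝ) *
        ((C ((Na + Nb) ^ 2) - (a + b) ^ 2) + (C ((Na + Nb) ^ 2) + (a - b) ^ 2)) ∈ M :=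
      cmul hM (by norm_num) _ (addmem hM hs₁ hd₂)
    have hh : (C (1/4 : ℝ) : MvPolynomial (Fin n) ℝ) * 4 = 1 := by
      rw [show (4 : MvPolynomial (Fin n) ℝ) = C (4:ℝ) from (map_ofNat C 4).symm,
        ← map_mul]; norm_num
    have hKS : (C ((Na + Nb) ^ 2 / 2) : MvPolynomial (Fin n) ℝ) =
        C (1/4 : ℝ) * C ((Na + Nb) ^ 2) * 2 := by
      rw [show (2 : MvPolynomial (Fin n) ℝ) = C (2:ℝ) from (map_ofNat C 2).symm,
        ← map_mul, ← map_mul]; congr 1; ring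
    have heq : (C ((Na + Nb) ^ 2 / 2) : MvPolynomial (Fin n) ℝ) - a * b =
        C (1/4 : ℝ) * ((C ((Na + Nb) ^ 2) - (a + b) ^ 2) + (C ((Na + Nb) ^ 2) + (a - b) ^ 2)) := by
      linear_combination hKS + a * b * hh
    rw [heq]; exact key
  · have key : (C (1/4 : ℝ) : MvPolynomial (Fin n) ℝ) *
        ((C ((Na + Nb) ^ 2) + (a + b) ^ 2) + (C ((Na + Nb) ^ 2) - (a - b) ^ 2)) ∈ M :=
      cmul hM (by norm_num) _ (addmem hM hs₂ hd₁)
    have hh : (C (1/4 : ℝ) : MvPolynomial (Fin n) ℝ) * 4 = 1 := by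
      rw [show (4 : MvPolynomial (Fin n) ℝ) = C (4:ℝ) from (map_ofNat C 4).symm,
        ← map_mul]; norm_num
    have hKS : (C ((Na + Nb) ^ 2 / 2) : MvPolynomial (Fin n) ℝ) =
        C (1/4 : ℝ) * C ((Na + Nb) ^ 2) * 2 := by
      rw [show (2 : MvPolynomial (Fin n) ℝ) = C (2:ℝ) from (map_ofNat C 2).symm,
        ← map_mul, ← map_mul]; congr 1; ring
    have heq : (C ((Na + Nb) ^ 2 / 2) : MvPolynomial (Fin n) ℝ) + a * b =
        C (1/4 : ℝ) * ((C ((Na + Nb) ^ 2) + (a + b) ^ 2) + (C ((Na + Nb) ^ 2) - (a - b) ^ 2)) := by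
      linear_combination hKS - a * b * hh
    rw [heq]; exact key

lemma xbound (hM : IsQuadraticModule M) (hArch : ∃ N : ℕ, (N : MvPolynomial (Fin n) ℝ) - ∑ i, X i ^ 2 ∈ M)
    (i : Fin n) :
    ∃ N : ℝ, 0 < N ∧ (C N : MvPolynomial (Fin n) ℝ) - X i ∈ M ∧
      (C N : MvPolynomial (Fin n) ℝ) + X i ∈ M := by
  obtain ⟨N₀, hN₀⟩ := hArch
  have hσ : IsSOS (∑ j, (if j = i then (0 : MvPolynomial (Fin n) ℝ) else X j) ^ 2) :=
    ⟨n, fun j => if j = i then 0 else X j, rfl⟩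
  have hσval : (∑ j, (if j = i then (0 : MvPolynomial (Fin n) ℝ) else X j) ^ 2) =
      (∑ j, (X j) ^ 2) - X i ^ 2 := by
    have h : ∀ x : Fin n, ((if x = i then (0 : MvPolynomial (Fin n) ℝ) else X x) ^ 2) =
        X x ^ 2 - (if x = i then X x ^ 2 else 0) := by intro x; split <;> simp
    rw [Finset.sum_congr rfl fun x _ => h x, Finset.sum_sub_distrib,
      Finset.sum_ite_eq' Finset.univ i (fun j => (X j : MvPolynomial (Fin n) ℝ) ^ 2)]
    simp
  have hNC : ((N₀ : MvPolynomial (Fin n) ℝ)) = C (N₀ : ℝ) := (map_natCast C N₀).symm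
  have hhalf : (C (1/2 : ℝ) : MvPolynomial (Fin n) ℝ) * 2 = 1 := by
    rw [show (2 : MvPolynomial (Fin n) ℝ) = C (2:ℝ) from (map_ofNat C 2).symm,
      ← map_mul]; norm_num
  have hN2 : (C (((N₀ : ℝ) + 1) / 2) : MvPolynomial (Fin n) ℝ) * 2 = C (N₀ : ℝ) + 1 := by
    rw [show (2 : MvPolynomial (Fin n) ℝ) = C (2:ℝ) from (map_ofNat C 2).symm,
      ← map_mul, show ((N₀ : ℝ) + 1) / 2 * 2 = (N₀ : ℝ) + 1 by ring, map_add, map_one]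
  refine ⟨((N₀ : ℝ) + 1) / 2, by positivity, ?_, ?_⟩
  · have key : (C (1/2 : ℝ) : MvPolynomial (Fin n) ℝ) *
        ((X i - 1) ^ 2 * 1 + ((∑ j, (if j = i then (0 : MvPolynomial (Fin n) ℝ) else X j) ^ 2) * 1
          + ((N₀ : MvPolynomial (Fin n) ℝ) - ∑ j, X j ^ 2))) ∈ M :=
      cmul hM (by norm_num) _ (addmem hM (sqmul hM _ _ hM.1)
        (addmem hM (hM.2.2 _ hσ 1 hM.1) hN₀))
    have heq : (C (((N₀ : ℝ) + 1) / 2) : MvPolynomial (Fin n) ℝ) - X i =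
        C (1/2 : ℝ) * ((X i - 1) ^ 2 * 1 +
          ((∑ j, (if j = i then (0 : MvPolynomial (Fin n) ℝ) else X j) ^ 2) * 1
          + ((N₀ : MvPolynomial (Fin n) ℝ) - ∑ j, X j ^ 2))) := by
      rw [hσval, hNC]
      linear_combination (X i - C (((N₀:ℝ) + 1) / 2)) * hhalf + (C (1/2 : ℝ) : MvPolynomial (Fin n) ℝ) * hN2
    rw [heq]; exact key
  · have key : (C (1/2 : ℝ) : MvPolynomial (Fin n) ℝ) *
        ((X i + 1) ^ 2 * 1 + ((∑ j, (if j = i then (0 : MvPolynomial (Fin n) ℝ) else X j) ^ 2) * 1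
          + ((N₀ : MvPolynomial (Fin n) ℝ) - ∑ j, X j ^ 2))) ∈ M :=
      cmul hM (by norm_num) _ (addmem hM (sqmul hM _ _ hM.1)
        (addmem hM (hM.2.2 _ hσ 1 hM.1) hN₀))
    have heq : (C (((N₀ : ℝ) + 1) / 2) : MvPolynomial (Fin n) ℝ) + X i =
        C (1/2 : ℝ) * ((X i + 1) ^ 2 * 1 +
          ((∑ j, (if j = i then (0 : MvPolynomial (Fin n) ℝ) else X j) ^ 2) * 1
          + ((N₀ : MvPolynomial (Fin n) ℝ) - ∑ j, X j ^ 2))) := by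
      rw [hσval, hNC]
      linear_combination (-(C (((N₀:ℝ) + 1) / 2) + X i)) * hhalf + (C (1/2 : ℝ) : MvPolynomial (Fin n) ℝ) * hN2
    rw [heq]; exact key

lemma bounded (hM : IsQuadraticModule M) (hArch : ∃ N : ℕ, (N : MvPolynomial (Fin n) ℝ) - ∑ i, X i ^ 2 ∈ M)
    (g : MvPolynomial (Fin n) ℝ) :
    ∃ N : ℝ, 0 < N ∧ (C N : MvPolynomial (Fin n) ℝ) - g ∈ M ∧
      (C N : MvPolynomial (Fin n) ℝ) + g ∈ M := by
  induction g using MvPolynomial.induction_on with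
  | C a =>
      refine ⟨|a| + 1, by positivity, ?_, ?_⟩
      · rw [← map_sub]
        exact cmem hM (by have := le_abs_self a; linarith)
      · rw [← map_add]
        exact cmem hM (by have := neg_abs_le a; linarith)
  | add p q hp hq =>
      obtain ⟨N₁, hN₁, hp₁, hp₂⟩ := hp
      obtain ⟨N₂, hN₂, hq₁, hq₂⟩ := hq
      refine ⟨N₁ + N₂, by linarith, ?_, ?_⟩
      · have heq : (C (N₁ + N₂) : MvPolynomial (Fin n) ℝ) - (p + q) =
            (C N₁ - p) + (C N₂ - q) := by rw [map_add]; ring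
        rw [heq]; exact addmem hM hp₁ hq₁
      · have heq : (C (N₁ + N₂) : MvPolynomial (Fin n) ℝ) + (p + q) =
            (C N₁ + p) + (C N₂ + q) := by rw [map_add]; ring
        rw [heq]; exact addmem hM hp₂ hq₂
  | mul_X p i hp =>
      obtain ⟨N₁, hN₁, hp₁, hp₂⟩ := hp
      obtain ⟨N₂, hN₂, hx₁, hx₂⟩ := xbound hM hArch i
      exact mulbound hM hN₁ hN₂ hp₁ hp₂ hx₁ hx₂

lemma shrink (hM : IsQuadraticModule M) {a p : MvPolynomial (Fin n) ℝ} {ε δ : ℝ} (hε : 0 < ε) (hδ : 0 < δ)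
    (hle : δ ≤ ε) (h : a + C ε * p ∈ M) (ha : a ∈ M) : a + C δ * p ∈ M := by
  have h1 : (C (δ / ε) : MvPolynomial (Fin n) ℝ) * C ε = C δ := by
    rw [← map_mul]; congr 1; field_simp
  have h2 : (C (δ / ε) : MvPolynomial (Fin n) ℝ) + C (1 - δ / ε) = 1 := by
    rw [← map_add, show δ / ε + (1 - δ / ε) = 1 by ring, map_one]
  have key : (C (δ / ε) : MvPolynomial (Fin n) ℝ) * (a + C ε * p)
      + C (1 - δ / ε) * a ∈ M := by
    refine addmem hM (cmul hM (by positivity) _ h) (cmul hM ?_ _ ha)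
    have : δ / ε ≤ 1 := (div_le_one hε).mpr hle
    linarith
  have heq : a + C δ * p = C (δ / ε) * (a + C ε * p) + C (1 - δ / ε) * a := by
    linear_combination (-a) * h2 + (-p) * h1
  rw [heq]; exact key

end StableAux

open StableAux in
theorem ideal_stably_contained {n : ℕ} (F : Set (MvPolynomial (Fin n) ℝ))
    (hF : F.Nonempty) (M : Set (MvPolynomial (Fin n) ℝ))
    (hM : IsQuadraticModule M)
    (hArch : ∃ N : ℕ, (N : MvPolynomial (Fin n) ℝ) - ∑ i, X i ^ 2 ∈ M)
    (u : MvPolynomial (Fin n) ℝ) (huM : ∀ p ∈ M, u * p ∈ M)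
    (hstab : ∀ f ∈ F, ∃ ε : ℝ, 0 < ε ∧ u + C ε * f ∈ M ∧ u - C ε * f ∈ M) :
    (∀ p ∈ Ideal.span F, ∃ ε : ℝ, 0 < ε ∧ u + C ε * p ∈ M ∧ u - C ε * p ∈ M) ∧
    (u ∈ Ideal.span F →
      ∀ v ∈ Ideal.span F, ∃ q ∈ (Ideal.span F : Set (MvPolynomial (Fin n) ℝ)) ∩ M,
        ∃ k : ℤ, v = q + k • u) := by
  have hu : u ∈ M := by simpa using huM 1 hM.1
  -- σ-step : multiply by an SOS element
  have sostep : ∀ σ : MvPolynomial (Fin n) ℝ, IsSOS σ → ∀ N : ℝ, 0 < N →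
      (C N : MvPolynomial (Fin n) ℝ) - σ ∈ M → ∀ p : MvPolynomial (Fin n) ℝ, ∀ ε : ℝ,
      0 < ε → u + C ε * p ∈ M → u + C (ε / N) * (σ * p) ∈ M := by
    intro σ hσ N hN hNσ p ε hε h
    have h1 : (C (1 / N) : MvPolynomial (Fin n) ℝ) * C N = 1 := by
      rw [← map_mul, show 1 / N * N = 1 by field_simp, map_one]
    have h2 : (C (1 / N) : MvPolynomial (Fin n) ℝ) * C ε = C (ε / N) := by
      rw [← map_mul]; congr 1; ring
    have key : (C (1 / N) : MvPolynomial (Fin n) ℝ) *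
        (σ * (u + C ε * p) + u * (C N - σ)) ∈ M :=
      cmul hM (by positivity) _ (addmem hM (hM.2.2 σ hσ _ h) (huM _ hNσ))
    have heq : u + C (ε / N) * (σ * p) =
        C (1 / N) * (σ * (u + C ε * p) + u * (C N - σ)) := by
      linear_combination (-u) * h1 + (-(σ * p)) * h2
    rw [heq]; exact key
  have main : ∀ p ∈ Ideal.span F, ∃ ε : ℝ, 0 < ε ∧ u + C ε * p ∈ M ∧ u - C ε * p ∈ M := by
    intro p hp
    induction hp using Submodule.span_induction with
    | mem f hf => exact hstab f hf
    | zero => exact ⟨1, one_pos, by simpa using hu, by simpa using hu⟩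
    | add x y hx hy ihx ihy =>
        obtain ⟨ε₁, hε₁, hx₁, hx₂⟩ := ihx
        obtain ⟨ε₂, hε₂, hy₁, hy₂⟩ := ihy
        set ε := min ε₁ ε₂ with hεdef
        have hε : 0 < ε := lt_min hε₁ hε₂
        have hx₁' : u + C ε * x ∈ M := shrink hM hε₁ hε (min_le_left _ _) hx₁ hu
        have hy₁' : u + C ε * y ∈ M := shrink hM hε₂ hε (min_le_right _ _) hy₁ hu
        have hx₂' : u + C ε * (-x) ∈ M := by
          have := shrink hM hε₁ hε (min_le_left _ _) (by
            have : u + C ε₁ * (-x) = u - C ε₁ * x := by ring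
            rw [this]; exact hx₂) hu
          exact this
        have hy₂' : u + C ε * (-y) ∈ M := by
          have := shrink hM hε₂ hε (min_le_right _ _) (by
            have : u + C ε₂ * (-y) = u - C ε₂ * y := by ring
            rw [this]; exact hy₂) hu
          exact this
        have hhalf : (C (1/2 : ℝ) : MvPolynomial (Fin n) ℝ) + C (1/2 : ℝ) = 1 := by
          rw [← map_add]; norm_num
        have hc : (C (1/2 : ℝ) : MvPolynomial (Fin n) ℝ) * C ε = C (ε / 2) := by
          rw [← map_mul]; congr 1; ring
        refine ⟨ε / 2, by positivity, ?_, ?_⟩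
        · have key : (C (1/2 : ℝ) : MvPolynomial (Fin n) ℝ) * (u + C ε * x)
              + C (1/2 : ℝ) * (u + C ε * y) ∈ M :=
            addmem hM (cmul hM (by norm_num) _ hx₁') (cmul hM (by norm_num) _ hy₁')
          have heq : u + C (ε / 2) * (x + y) =
              C (1/2 : ℝ) * (u + C ε * x) + C (1/2 : ℝ) * (u + C ε * y) := by
            linear_combination (-u) * hhalf - (x + y) * hc
          rw [heq]; exact key
        · have key : (C (1/2 : ℝ) : MvPolynomial (Fin n) ℝ) * (u + C ε * (-x))
              + C (1/2 : ℝ) * (u + C ε * (-y)) ∈ M :=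
            addmem hM (cmul hM (by norm_num) _ hx₂') (cmul hM (by norm_num) _ hy₂')
          have heq : u - C (ε / 2) * (x + y) =
              C (1/2 : ℝ) * (u + C ε * (-x)) + C (1/2 : ℝ) * (u + C ε * (-y)) := by
            linear_combination (-u) * hhalf + (x + y) * hc
          rw [heq]; exact key
    | smul g x hx ih =>
        obtain ⟨ε, hε, h₁, h₂⟩ := ih
        obtain ⟨N₁, hN₁, hb₁, _⟩ := bounded hM hArch ((g + 1) ^ 2)
        obtain ⟨N₂, hN₂, hb₂, _⟩ := bounded hM hArch ((g - 1) ^ 2)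
        have h₂' : u + C ε * (-x) ∈ M := by
          have : u + C ε * (-x) = u - C ε * x := by ring
          rw [this]; exact h₂
        -- from sostep
        have s₁p : u + C (ε / N₁) * ((g + 1) ^ 2 * x) ∈ M :=
          sostep _ (sq_isSOS _) N₁ hN₁ hb₁ x ε hε h₁
        have s₁m : u + C (ε / N₁) * ((g + 1) ^ 2 * (-x)) ∈ M :=
          sostep _ (sq_isSOS _) N₁ hN₁ hb₁ (-x) ε hε h₂'
        have s₂p : u + C (ε / N₂) * ((g - 1) ^ 2 * x) ∈ M :=
          sostep _ (sq_isSOS _) N₂ hN₂ hb₂ x ε hε h₁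
        have s₂m : u + C (ε / N₂) * ((g - 1) ^ 2 * (-x)) ∈ M :=
          sostep _ (sq_isSOS _) N₂ hN₂ hb₂ (-x) ε hε h₂'
        set δ := min (ε / N₁) (ε / N₂) with hδdef
        have hδ : 0 < δ := lt_min (by positivity) (by positivity)
        have hδ2 : 0 < δ / 2 := by positivity
        have t₁p : u + C (δ / 2) * ((g + 1) ^ 2 * x) ∈ M :=
          shrink hM (by positivity) hδ2 (by
            calc δ / 2 ≤ δ := by linarith
            _ ≤ ε / N₁ := min_le_left _ _) s₁p hu
        have t₁m : u + C (δ / 2) * ((g + 1) ^ 2 * (-x)) ∈ M :=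
          shrink hM (by positivity) hδ2 (by
            calc δ / 2 ≤ δ := by linarith
            _ ≤ ε / N₁ := min_le_left _ _) s₁m hu
        have t₂p : u + C (δ / 2) * ((g - 1) ^ 2 * x) ∈ M :=
          shrink hM (by positivity) hδ2 (by
            calc δ / 2 ≤ δ := by linarith
            _ ≤ ε / N₂ := min_le_right _ _) s₂p hu
        have t₂m : u + C (δ / 2) * ((g - 1) ^ 2 * (-x)) ∈ M :=
          shrink hM (by positivity) hδ2 (by
            calc δ / 2 ≤ δ := by linarith
            _ ≤ ε / N₂ := min_le_right _ _) s₂m hu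
        have hhalf : (C (1/2 : ℝ) : MvPolynomial (Fin n) ℝ) + C (1/2 : ℝ) = 1 := by
          rw [← map_add]; norm_num
        have hδ4 : (C δ : MvPolynomial (Fin n) ℝ) =
            C (1/2 : ℝ) * C (δ / 2) * 4 := by
          rw [show (4 : MvPolynomial (Fin n) ℝ) = C (4:ℝ) from (map_ofNat C 4).symm,
            ← map_mul, ← map_mul]; congr 1; ring
        refine ⟨δ, hδ, ?_, ?_⟩
        · have key : (C (1/2 : ℝ) : MvPolynomial (Fin n) ℝ) *
              (u + C (δ / 2) * ((g + 1) ^ 2 * x))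
              + C (1/2 : ℝ) * (u + C (δ / 2) * ((g - 1) ^ 2 * (-x))) ∈ M :=
            addmem hM (cmul hM (by norm_num) _ t₁p) (cmul hM (by norm_num) _ t₂m)
          have heq : u + C δ * (g • x) =
              C (1/2 : ℝ) * (u + C (δ / 2) * ((g + 1) ^ 2 * x))
              + C (1/2 : ℝ) * (u + C (δ / 2) * ((g - 1) ^ 2 * (-x))) := by
            rw [smul_eq_mul]
            linear_combination (-u) * hhalf + (g * x) * hδ4
          rw [heq]; exact key
        · have key : (C (1/2 : ℝ) : MvPolynomial (Fin n) ℝ) *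
              (u + C (δ / 2) * ((g + 1) ^ 2 * (-x)))
              + C (1/2 : ℝ) * (u + C (δ / 2) * ((g - 1) ^ 2 * x)) ∈ M :=
            addmem hM (cmul hM (by norm_num) _ t₁m) (cmul hM (by norm_num) _ t₂p)
          have heq : u - C δ * (g • x) =
              C (1/2 : ℝ) * (u + C (δ / 2) * ((g + 1) ^ 2 * (-x)))
              + C (1/2 : ℝ) * (u + C (δ / 2) * ((g - 1) ^ 2 * x)) := by
            rw [smul_eq_mul]
            linear_combination (-u) * hhalf - (g * x) * hδ4
          rw [heq]; exact key
  refine ⟨main, ?_⟩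
  intro hu_span v hv
  obtain ⟨ε, hε, hplus, _⟩ := main v hv
  set j : ℕ := ⌈1 / ε⌉₊ with hjdef
  have hj : 1 / ε ≤ (j : ℝ) := Nat.le_ceil _
  have h1 : (C (1 / ε) : MvPolynomial (Fin n) ℝ) * C ε = 1 := by
    rw [← map_mul, show 1 / ε * ε = 1 by field_simp, map_one]
  have h2 : (C (1 / ε) : MvPolynomial (Fin n) ℝ) + C ((j : ℝ) - 1 / ε) = C (j : ℝ) := by
    rw [← map_add]; congr 1; ring
  have hq_mem : v + (j : ℕ) • u ∈ M := by
    have key : (C (1 / ε) : MvPolynomial (Fin n) ℝ) * (u + C ε * v)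
        + C ((j : ℝ) - 1 / ε) * u ∈ M :=
      StableAux.addmem hM (StableAux.cmul hM (by positivity) _ hplus)
        (StableAux.cmul hM (by linarith) _ hu)
    have heq : v + (j : ℕ) • u =
        C (1 / ε) * (u + C ε * v) + C ((j : ℝ) - 1 / ε) * u := by
      rw [nsmul_eq_mul, show ((j : ℕ) : MvPolynomial (Fin n) ℝ) = C (j : ℝ) from
        (map_natCast C j).symm]
      linear_combination (-v) * h1 - u * h2
    rw [heq]; exact key
  refine ⟨v + (j : ℕ) • u, ⟨?_, hq_mem⟩, -(j : ℤ), ?_⟩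
  · exact Submodule.add_mem _ hv (nsmul_mem hu_span j)
  · rw [neg_smul, natCast_zsmul]; abel
end

section
/- For positive reals d₁,...,d₅, the 5×5 matrix DHD (where D = diag(d₁,...,d₅) and H is the Horn matrix) is Reznick-certifiable — i.e., (Σᵢxᵢ²)^r (x^{∘2})^T DHD x^{∘2} is a sum of squares for some r ∈ ℕ₀ — if and only if (x^{∘2})^T H x^{∘2} ∈ Σ + I(Σᵢ₌₁⁵ dᵢ⁻¹ xᵢ² - 1), where Σ is the set of sums of squares and I(f) the ideal generated by f. -/
open MvPolynomial

def Horn : Matrix (Fin 5) (Fin 5) ℝ :=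
  !![1,1,-1,-1,1; 1,1,1,-1,-1; -1,1,1,1,-1; -1,-1,1,1,1; 1,-1,-1,1,1]

noncomputable def quartForm {n : ℕ} (M : Matrix (Fin n) (Fin n) ℝ) :
    MvPolynomial (Fin n) ℝ :=
  ∑ i, ∑ j, MvPolynomial.C (M i j) * X i ^ 2 * X j ^ 2

/-!
If `(∑ xᵢ²)ʳ f` is a sum of squares then `f` is that sum of squares plus
`(1 - (∑ xᵢ²)ʳ) f ∈ I(∑ xᵢ² - 1)`. Conversely, if `f = ∑ pₖ²` on the unit sphere and `f` is a
form of even degree, then `f(x) = f(-x)` gives `f = ∑ (eₖ² + oₖ²)` on the sphere, where `eₖ`, `oₖ`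
are the even and odd parts of `pₖ`. Homogenizing `eₖ` to degree `2N` and `oₖ` to degree `2N + 1`
with powers of `∑ xᵢ²` turns this into an identity between forms of degree `4N + 2`, namely
`(∑ xᵢ²)ʳ f = ∑ₖ ((∑ xᵢ²) Eₖ² + Oₖ²)`, a Reznick certificate.

The substitution `xᵢ ↦ xᵢ / √dᵢ` is a ring automorphism that preserves sums of squares and
principal ideals, and carries `x^{∘2}ᵀ DHD x^{∘2}` to `x^{∘2}ᵀ H x^{∘2}` and `∑ xᵢ² - 1` to
`∑ dᵢ⁻¹ xᵢ² - 1`.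
-/

theorem Finset.sum_range_two_mul {M : Type*} [AddCommMonoid M] (f : ℕ → M) (n : ℕ) :
    ∑ j ∈ Finset.range (2 * n), f j = ∑ j ∈ Finset.range n, (f (2 * j) + f (2 * j + 1)) := by
  induction n with
  | zero => simp
  | succ n ih =>
    rw [Nat.mul_succ, Finset.sum_range_succ, Finset.sum_range_succ, ih, Finset.sum_range_succ,
      add_assoc]

theorem IsSumSq.isSOS {n : ℕ} {f : MvPolynomial (Fin n) ℝ} (h : IsSumSq f) : IsSOS f := by
  induction h with
  | zero => exact ⟨0, ![], by simp⟩
  | sq_add a _ ih =>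
    obtain ⟨m, p, rfl⟩ := ih
    exact ⟨m + 1, Fin.cons a p, by simp [Fin.sum_univ_succ, sq]⟩

theorem IsSOS.map {n m : ℕ} {f : MvPolynomial (Fin n) ℝ}
    (φ : MvPolynomial (Fin n) ℝ →+* MvPolynomial (Fin m) ℝ) (h : IsSOS f) : IsSOS (φ f) := by
  obtain ⟨k, p, rfl⟩ := h
  exact ⟨k, fun i => φ (p i), by simp⟩

def IsSOSModulo {n : ℕ} (t f : MvPolynomial (Fin n) ℝ) : Prop :=
  ∃ σ g : MvPolynomial (Fin n) ℝ, IsSOS σ ∧ g ∈ Ideal.span {t} ∧ f = σ + g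

theorem IsSOSModulo.map {n m : ℕ} {t f : MvPolynomial (Fin n) ℝ}
    (φ : MvPolynomial (Fin n) ℝ →+* MvPolynomial (Fin m) ℝ) (h : IsSOSModulo t f) :
    IsSOSModulo (φ t) (φ f) := by
  obtain ⟨σ, g, hσ, hg, rfl⟩ := h
  exact ⟨φ σ, φ g, hσ.map φ,
    Ideal.mem_span_singleton.mpr (map_dvd φ (Ideal.mem_span_singleton.mp hg)), map_add φ σ g⟩

theorem isSOSModulo_map_iff {n : ℕ} (e : MvPolynomial (Fin n) ℝ ≃+* MvPolynomial (Fin n) ℝ)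
    {t f : MvPolynomial (Fin n) ℝ} : IsSOSModulo (e t) (e f) ↔ IsSOSModulo t f := by
  refine ⟨fun h => ?_, fun h => h.map e.toRingHom⟩
  simpa only [RingEquiv.toRingHom_eq_coe, RingEquiv.coe_toRingHom, RingEquiv.symm_apply_apply]
    using h.map e.symm.toRingHom

namespace MvPolynomial

theorem IsHomogeneous.eval_smul {σ R : Type*} [CommSemiring R] {φ : MvPolynomial σ R} {m : ℕ}
    (hφ : φ.IsHomogeneous m) (c : R) (x : σ → R) :
    eval (c • x) φ = c ^ m * eval x φ := by
  rw [eval_eq, eval_eq, Finset.mul_sum]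
  refine Finset.sum_congr rfl fun d hd => ?_
  have hdeg : ∑ i ∈ d.support, d i = m := by
    rw [← Finsupp.degree_apply, Finsupp.degree_eq_weight_one]; exact hφ (mem_support_iff.mp hd)
  simp only [Pi.smul_apply, smul_eq_mul, mul_pow, Finset.prod_mul_distrib,
    Finset.prod_pow_eq_pow_sum, hdeg]
  ring

variable {σ : Type*} [Fintype σ]

theorem isHomogeneous_sum_X_sq : (∑ i, X i ^ 2 : MvPolynomial σ ℝ).IsHomogeneous 2 :=
  IsHomogeneous.sum _ _ _ fun i _ => isHomogeneous_X_pow i 2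

theorem eval_sum_X_sq (x : σ → ℝ) : eval x (∑ i, X i ^ 2) = ∑ i, x i ^ 2 := by simp

theorem IsHomogeneous.eq_of_eval_eq_on_sphere {φ ψ : MvPolynomial σ ℝ} {m : ℕ} (hm : m ≠ 0)
    (hφ : φ.IsHomogeneous m) (hψ : ψ.IsHomogeneous m)
    (h : ∀ x : σ → ℝ, ∑ i, x i ^ 2 = 1 → eval x φ = eval x ψ) : φ = ψ := by
  refine MvPolynomial.funext fun x => ?_
  obtain rfl | hx := eq_or_ne x 0
  · have hφ0 := hφ.eval_smul 0 0
    have hψ0 := hψ.eval_smul 0 0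
    simp_all [zero_pow hm]
  set r := √(∑ i, x i ^ 2)
  have hr : 0 < r := by
    obtain ⟨i, hi⟩ := Function.ne_iff.mp hx
    exact Real.sqrt_pos.mpr <| Finset.sum_pos' (fun i _ => sq_nonneg (x i))
      ⟨i, Finset.mem_univ i, pow_pos (abs_pos.mpr hi) 2 |>.trans_eq (sq_abs _)⟩
  have hxr : x = r • r⁻¹ • x := by rw [smul_smul, mul_inv_cancel₀ hr.ne', one_smul]
  have hsphere : ∑ i, (r⁻¹ • x) i ^ 2 = 1 := by
    have hr2 : r ^ 2 = ∑ i, x i ^ 2 := Real.sq_sqrt (Finset.sum_nonneg fun i _ => sq_nonneg _)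
    simp only [Pi.smul_apply, smul_eq_mul, mul_pow, ← Finset.mul_sum, inv_pow, ← hr2]
    exact inv_mul_cancel₀ (pow_ne_zero 2 hr.ne')
  rw [hxr, hφ.eval_smul, hψ.eval_smul, h _ hsphere]

/-- The even (`b = 0`) or odd (`b = 1`) part of `p`, made homogeneous of degree `2N + b` by
powers of `∑ xᵢ²`. -/
noncomputable def parityHomogenization (N b : ℕ) (p : MvPolynomial σ ℝ) : MvPolynomial σ ℝ :=
  ∑ j ∈ Finset.range (N + 1), (∑ i, X i ^ 2) ^ (N - j) * homogeneousComponent (2 * j + b) p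

theorem isHomogeneous_parityHomogenization (N b : ℕ) (p : MvPolynomial σ ℝ) :
    (parityHomogenization N b p).IsHomogeneous (2 * N + b) := by
  refine IsHomogeneous.sum _ _ _ fun j hj => ?_
  convert (isHomogeneous_sum_X_sq.pow (N - j)).mul (homogeneousComponent_isHomogeneous _ p)
    using 1
  have := Finset.mem_range.mp hj
  omega

theorem eval_parityHomogenization {N b : ℕ} (p : MvPolynomial σ ℝ) {x : σ → ℝ}
    (hx : ∑ i, x i ^ 2 = 1) :
    eval x (parityHomogenization N b p) =
      ∑ j ∈ Finset.range (N + 1), eval x (homogeneousComponent (2 * j + b) p) := by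
  simp [parityHomogenization, hx]

theorem eval_parityHomogenization_zero_add_one {N : ℕ} {p : MvPolynomial σ ℝ}
    (hp : p.totalDegree < 2 * (N + 1)) {x : σ → ℝ} (hx : ∑ i, x i ^ 2 = 1) :
    eval x (parityHomogenization N 0 p) + eval x (parityHomogenization N 1 p) = eval x p := by
  have hsum : ∑ j ∈ Finset.range (2 * (N + 1)), homogeneousComponent j p = p := by
    conv_rhs => rw [← sum_homogeneousComponent p]
    exact (Finset.sum_subset (Finset.range_subset_range.mpr (by omega)) fun j _ hj =>
      homogeneousComponent_eq_zero j p (by simpa using hj)).symm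
  rw [eval_parityHomogenization p hx, eval_parityHomogenization p hx, ← Finset.sum_add_distrib]
  conv_rhs => rw [← hsum, map_sum, Finset.sum_range_two_mul]
  simp only [add_zero]

noncomputable def homogenizedSquare (N : ℕ) (p : MvPolynomial σ ℝ) : MvPolynomial σ ℝ :=
  (∑ i, X i ^ 2) * parityHomogenization N 0 p ^ 2 + parityHomogenization N 1 p ^ 2

theorem isHomogeneous_homogenizedSquare (N : ℕ) (p : MvPolynomial σ ℝ) :
    (homogenizedSquare N p).IsHomogeneous (4 * N + 2) := by
  refine IsHomogeneous.add ?_ ?_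
  · convert isHomogeneous_sum_X_sq.mul ((isHomogeneous_parityHomogenization N 0 p).pow 2)
      using 1
    ring
  · convert (isHomogeneous_parityHomogenization N 1 p).pow 2 using 1
    ring

theorem isSumSq_homogenizedSquare (N : ℕ) (p : MvPolynomial σ ℝ) :
    IsSumSq (homogenizedSquare N p) :=
  ((IsSumSq.sum_sq _ _).mul (IsSquare.sq _).isSumSq).add (IsSquare.sq _).isSumSq

theorem eval_sq_add_eval_neg_sq {N : ℕ} {p : MvPolynomial σ ℝ}
    (hp : p.totalDegree < 2 * (N + 1)) {x : σ → ℝ} (hx : ∑ i, x i ^ 2 = 1) :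
    eval x p ^ 2 + eval (-x) p ^ 2 = 2 * eval x (homogenizedSquare N p) := by
  have hnx : ∑ i, (-x) i ^ 2 = 1 := by simpa using hx
  have heven := (isHomogeneous_parityHomogenization N 0 p).eval_smul (-1) x
  have hodd := (isHomogeneous_parityHomogenization N 1 p).eval_smul (-1) x
  rw [neg_one_smul, pow_add, pow_mul, neg_one_sq, one_pow] at heven hodd
  rw [← eval_parityHomogenization_zero_add_one hp hx,
    ← eval_parityHomogenization_zero_add_one hp hnx, heven, hodd]
  simp only [homogenizedSquare, map_add, map_mul, map_pow, eval_sum_X_sq, hx]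
  ring

end MvPolynomial

section Reznick

variable {n : ℕ}

theorem isSOSModulo_of_isSOS_sum_X_sq_pow_mul {f : MvPolynomial (Fin n) ℝ} {r : ℕ}
    (h : IsSOS ((∑ i, X i ^ 2) ^ r * f)) : IsSOSModulo (∑ i, X i ^ 2 - 1) f := by
  refine ⟨_, f - (∑ i, X i ^ 2) ^ r * f, h, Ideal.mem_span_singleton.mpr ?_, by ring⟩
  rw [show f - (∑ i, X i ^ 2) ^ r * f = -(((∑ i, X i ^ 2) ^ r - 1 ^ r) * f) by ring]
  exact dvd_neg.mpr ((sub_dvd_pow_sub_pow _ 1 r).mul_right f)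

theorem IsSOSModulo.exists_isSOS_sum_X_sq_pow_mul {f : MvPolynomial (Fin n) ℝ} {m : ℕ}
    (hf : f.IsHomogeneous (2 * m)) (h : IsSOSModulo (∑ i, X i ^ 2 - 1) f) :
    ∃ r : ℕ, IsSOS ((∑ i, X i ^ 2) ^ r * f) := by
  obtain ⟨_, _, ⟨K, p, rfl⟩, hg, hfeq⟩ := h
  obtain ⟨q, rfl⟩ := Ideal.mem_span_singleton.mp hg
  set N := m + ∑ k, (p k).totalDegree
  have hpN (k : Fin K) : (p k).totalDegree < 2 * (N + 1) := by
    have := Finset.single_le_sum (fun k _ => Nat.zero_le ((p k).totalDegree)) (Finset.mem_univ k)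
    omega
  have hf_sphere {x : Fin n → ℝ} (hx : ∑ i, x i ^ 2 = 1) : eval x f = ∑ k, eval x (p k) ^ 2 := by
    simp [hfeq, hx]
  refine ⟨2 * N + 1 - m, ?_⟩
  suffices (∑ i, X i ^ 2) ^ (2 * N + 1 - m) * f = ∑ k, homogenizedSquare N (p k) by
    rw [this]
    exact (IsSumSq.sum fun k _ => isSumSq_homogenizedSquare N (p k)).isSOS
  refine IsHomogeneous.eq_of_eval_eq_on_sphere (m := 4 * N + 2) (by omega) ?_
    (IsHomogeneous.sum _ _ _ fun k _ => isHomogeneous_homogenizedSquare N (p k)) fun x hx => ?_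
  · convert (isHomogeneous_sum_X_sq.pow _).mul hf using 1
    omega
  have hnx : ∑ i, (-x) i ^ 2 = 1 := by simpa using hx
  have hf_even : eval (-x) f = eval x f := by
    rw [← neg_one_smul ℝ x, hf.eval_smul, pow_mul, neg_one_sq, one_pow, one_mul]
  have := Finset.sum_congr rfl fun k (_ : k ∈ Finset.univ) => eval_sq_add_eval_neg_sq (hpN k) hx
  rw [Finset.sum_add_distrib, ← hf_sphere hx, ← hf_sphere hnx, hf_even, ← Finset.mul_sum] at this
  rw [map_mul, map_pow, eval_sum_X_sq, hx, one_pow, one_mul, map_sum]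
  linarith

theorem exists_isSOS_sum_X_sq_pow_mul_iff {f : MvPolynomial (Fin n) ℝ} {m : ℕ}
    (hf : f.IsHomogeneous (2 * m)) :
    (∃ r : ℕ, IsSOS ((∑ i, X i ^ 2) ^ r * f)) ↔ IsSOSModulo (∑ i, X i ^ 2 - 1) f :=
  ⟨fun ⟨_, h⟩ => isSOSModulo_of_isSOS_sum_X_sq_pow_mul h,
    IsSOSModulo.exists_isSOS_sum_X_sq_pow_mul hf⟩

end Reznick

namespace MvPolynomial

variable {σ R : Type*} [CommSemiring R]

noncomputable def scaleVars (c : σ → R) :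
    MvPolynomial σ R →ₐ[R] MvPolynomial σ R :=
  aeval fun i => C (c i) * X i

theorem scaleVars_comp_scaleVars (c c' : σ → R) :
    (scaleVars c).comp (scaleVars c') = scaleVars (c * c') :=
  algHom_ext fun i => by
    simp only [scaleVars, AlgHom.comp_apply, aeval_X, map_mul, aeval_C, algebraMap_eq,
      Pi.mul_apply]
    ring

theorem scaleVars_one :
    scaleVars (1 : σ → R) = AlgHom.id R (MvPolynomial σ R) :=
  algHom_ext fun i => by simp [scaleVars]

noncomputable def scaleVarsEquiv {K : Type*} [Field K] (c : σ → K) (hc : ∀ i, c i ≠ 0) :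
    MvPolynomial σ K ≃ₐ[K] MvPolynomial σ K :=
  AlgEquiv.ofAlgHom (scaleVars c) (scaleVars c⁻¹)
    (by rw [scaleVars_comp_scaleVars, show c * c⁻¹ = 1 by ext i; exact mul_inv_cancel₀ (hc i),
      scaleVars_one])
    (by rw [scaleVars_comp_scaleVars, show c⁻¹ * c = 1 by ext i; exact inv_mul_cancel₀ (hc i),
      scaleVars_one])

theorem scaleVars_sum_X_sq [Fintype σ] (c : σ → R) :
    scaleVars c (∑ i, X i ^ 2) = ∑ i, C (c i ^ 2) * X i ^ 2 := by
  simp only [scaleVars, map_sum, map_pow, aeval_X, mul_pow]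

theorem scaleVars_quartForm {n : ℕ} (c : Fin n → ℝ) (M : Matrix (Fin n) (Fin n) ℝ) :
    scaleVars c (quartForm M) = quartForm fun i j => c i ^ 2 * M i j * c j ^ 2 := by
  simp only [quartForm, map_sum]
  refine Finset.sum_congr rfl fun i _ => Finset.sum_congr rfl fun j _ => ?_
  simp only [scaleVars, map_mul, map_pow, aeval_X, aeval_C, algebraMap_eq]
  ring

theorem isHomogeneous_quartForm {n : ℕ} (M : Matrix (Fin n) (Fin n) ℝ) :
    (quartForm M).IsHomogeneous 4 :=
  IsHomogeneous.sum _ _ _ fun i _ => IsHomogeneous.sum _ _ _ fun j _ =>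
    ((isHomogeneous_C _ _).mul (isHomogeneous_X_pow i 2)).mul (isHomogeneous_X_pow j 2)

end MvPolynomial

theorem DHD_reznick_iff (d : Fin 5 → ℝ) (hd : ∀ i, 0 < d i) :
    (∃ r : ℕ, IsSOS ((∑ i, X i ^ 2) ^ r *
        quartForm (fun i j => d i * Horn i j * d j))) ↔
      ∃ σ g : MvPolynomial (Fin 5) ℝ, IsSOS σ ∧
        g ∈ Ideal.span {(∑ i, C (d i)⁻¹ * X i ^ 2 : MvPolynomial (Fin 5) ℝ) - 1} ∧
        quartForm Horn = σ + g := by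
  set c : Fin 5 → ℝ := fun i => (√(d i))⁻¹
  have hc2 (i : Fin 5) : c i ^ 2 = (d i)⁻¹ := by simp [c, inv_pow, Real.sq_sqrt (hd i).le]
  set e := (scaleVarsEquiv c fun i => inv_ne_zero (Real.sqrt_pos.mpr (hd i)).ne').toRingEquiv
  have he (p : MvPolynomial (Fin 5) ℝ) : e p = scaleVars c p := rfl
  have h_sphere : e (∑ i, X i ^ 2 - 1) = ∑ i, C (d i)⁻¹ * X i ^ 2 - 1 := by
    rw [he, map_sub, map_one, scaleVars_sum_X_sq]
    simp only [hc2]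
  have h_form : e (quartForm fun i j => d i * Horn i j * d j) = quartForm Horn := by
    refine (he _).trans <| (scaleVars_quartForm c _).trans <| congrArg quartForm ?_
    ext i j
    rw [hc2, hc2]
    field_simp [(hd i).ne', (hd j).ne']
  refine (exists_isSOS_sum_X_sq_pow_mul_iff (m := 2) (isHomogeneous_quartForm _)).trans ?_
  rw [← isSOSModulo_map_iff e, h_sphere, h_form]
  rfl
end
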